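/- arXiv:2106.08251 — 6 statements merged into one kernel-verified Lean document; each statement's English description precedes it below -/
import Mathlib

section
/- In a minimal syndrome trellis for a stabilizer code over qudits of prime dimension p, every vertex v ∈ V_i (1 ≤ i ≤ n) has the same incoming degree deg_in(v) = |E_i|/|V_i| = p^{dim S⊥_{𝔭_i} − dim S⊥_{𝔭_{i−1}}}, and every vertex v ∈ V_i (0 ≤ i ≤ n−1) has the same outgoing degree deg_out(v) = |E_{i+1}|/|V_i| = p^{dim S⊥_{𝔣_i} − dim S⊥_{𝔣_{i+1}}}. In particular each degree lies in {1, p, p²}. -/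
variable {p n : ℕ}

/-- The "past" subgroup at depth `i`: elements of `S` supported on the first `i`
(qudit) coordinates, i.e. vanishing at all (0-indexed) coordinates `j ≥ i`. -/
def pastSub (S : Submodule (ZMod p) (Fin n → ZMod p × ZMod p)) (i : ℕ) :
    Submodule (ZMod p) (Fin n → ZMod p × ZMod p) where
  carrier := {v | v ∈ S ∧ ∀ j : Fin n, i ≤ (j : ℕ) → v j = 0}
  add_mem' := by
    rintro a b ⟨ha, ha'⟩ ⟨hb, hb'⟩
    exact ⟨S.add_mem ha hb, fun j hj => by simp [ha' j hj, hb' j hj]⟩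
  zero_mem' := ⟨S.zero_mem, fun _ _ => rfl⟩
  smul_mem' := by
    rintro c a ⟨ha, ha'⟩
    exact ⟨S.smul_mem c ha, fun j hj => by simp [ha' j hj]⟩

/-- The "future" subgroup at depth `i`: elements of `S` vanishing at all
(0-indexed) coordinates `j < i`. -/
def futureSub (S : Submodule (ZMod p) (Fin n → ZMod p × ZMod p)) (i : ℕ) :
    Submodule (ZMod p) (Fin n → ZMod p × ZMod p) where
  carrier := {v | v ∈ S ∧ ∀ j : Fin n, (j : ℕ) < i → v j = 0}
  add_mem' := by
    rintro a b ⟨ha, ha'⟩ ⟨hb, hb'⟩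
    exact ⟨S.add_mem ha hb, fun j hj => by simp [ha' j hj, hb' j hj]⟩
  zero_mem' := ⟨S.zero_mem, fun _ _ => rfl⟩
  smul_mem' := by
    rintro c a ⟨ha, ha'⟩
    exact ⟨S.smul_mem c ha, fun j hj => by simp [ha' j hj]⟩

/-- The symplectic pairing of two single-qudit symplectic pairs. -/
def symp {p : ℕ} (x y : ZMod p × ZMod p) : ZMod p := x.1 * y.2 - x.2 * y.1

/-- The partial syndrome at depth `i` of a Pauli string `P` with respect to the
stabilizer generators `H`: only the first `i` coordinates contribute. -/
def syn {p n r : ℕ} (H : Fin r → Fin n → ZMod p × ZMod p) (i : ℕ)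
    (P : Fin n → ZMod p × ZMod p) : Fin r → ZMod p :=
  fun j => ∑ l : Fin n, if (l : ℕ) < i then symp (H j l) (P l) else 0

/-- The vertex set at depth `i` of the syndrome trellis: partial syndromes of
elements of `S⊥`. -/
def trellisVertices {p n r : ℕ} (S : Submodule (ZMod p) (Fin n → ZMod p × ZMod p))
    (H : Fin r → Fin n → ZMod p × ZMod p) (i : ℕ) : Set (Fin r → ZMod p) :=
  (syn H i) '' S

/-- The edge section between depths `i` and `i + 1` of the syndrome trellis:
triples `(source, label, terminus)` coming from elements of `S⊥`. -/
def trellisEdges {p n r : ℕ} (S : Submodule (ZMod p) (Fin n → ZMod p × ZMod p))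
    (H : Fin r → Fin n → ZMod p × ZMod p) (i : ℕ) (hi : i < n) :
    Set ((Fin r → ZMod p) × (ZMod p × ZMod p) × (Fin r → ZMod p)) :=
  {e | ∃ P ∈ S, e = (syn H i P, P ⟨i, hi⟩, syn H (i + 1) P)}

section TrellisAux

variable {p n r : ℕ}

@[simp] lemma symp_zero (x : ZMod p × ZMod p) : symp x 0 = 0 := by
  simp [symp]

/-- `syn H i` as a linear map. -/
def synL (H : Fin r → Fin n → ZMod p × ZMod p) (i : ℕ) :
    (Fin n → ZMod p × ZMod p) →ₗ[ZMod p] (Fin r → ZMod p) where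
  toFun := syn H i
  map_add' a b := by
    funext j
    simp only [syn, Pi.add_apply, ← Finset.sum_add_distrib]
    refine Finset.sum_congr rfl fun l _ => ?_
    by_cases h : (l : ℕ) < i <;>
      simp [h, symp, Prod.fst_add, Prod.snd_add] <;> ring
  map_smul' c a := by
    funext j
    simp only [syn, RingHom.id_apply, Pi.smul_apply, smul_eq_mul, Finset.mul_sum]
    refine Finset.sum_congr rfl fun l _ => ?_
    by_cases h : (l : ℕ) < i <;>
      simp [h, symp, Prod.smul_fst, Prod.smul_snd, smul_eq_mul] <;> ring

@[simp] lemma synL_apply (H : Fin r → Fin n → ZMod p × ZMod p) (i : ℕ)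
    (P : Fin n → ZMod p × ZMod p) : synL H i P = syn H i P := rfl

/-- Truncation to the first `i` coordinates, as a linear map. -/
def truncL (i : ℕ) :
    (Fin n → ZMod p × ZMod p) →ₗ[ZMod p] (Fin n → ZMod p × ZMod p) where
  toFun P := fun l => if (l : ℕ) < i then P l else 0
  map_add' a b := by funext l; by_cases h : (l : ℕ) < i <;> simp [h]
  map_smul' c a := by funext l; by_cases h : (l : ℕ) < i <;> simp [h]

@[simp] lemma truncL_apply (i : ℕ) (P : Fin n → ZMod p × ZMod p) (l : Fin n) :
    truncL i P l = if (l : ℕ) < i then P l else 0 := rfl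

lemma truncL_vanish (i : ℕ) (P : Fin n → ZMod p × ZMod p) {l : Fin n}
    (h : i ≤ (l : ℕ)) : truncL i P l = 0 := by
  simp [Nat.not_lt.2 h]

lemma truncL_eq_self {i : ℕ} {P : Fin n → ZMod p × ZMod p}
    (h : ∀ l : Fin n, i ≤ (l : ℕ) → P l = 0) : truncL i P = P := by
  funext l
  by_cases hl : (l : ℕ) < i
  · simp [hl]
  · simp [hl, h l (le_of_not_gt hl)]

lemma syn_eq_full (H : Fin r → Fin n → ZMod p × ZMod p) (i : ℕ)
    {P : Fin n → ZMod p × ZMod p} (h : ∀ l : Fin n, i ≤ (l : ℕ) → P l = 0)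
    (j : Fin r) : syn H i P j = ∑ l : Fin n, symp (H j l) (P l) := by
  refine Finset.sum_congr rfl fun l _ => ?_
  by_cases hl : (l : ℕ) < i
  · simp [syn, hl]
  · simp [hl, h l (le_of_not_gt hl)]

lemma full_truncL (H : Fin r → Fin n → ZMod p × ZMod p) (i : ℕ)
    (P : Fin n → ZMod p × ZMod p) (j : Fin r) :
    ∑ l : Fin n, symp (H j l) (truncL i P l) = syn H i P j := by
  refine Finset.sum_congr rfl fun l _ => ?_
  by_cases hl : (l : ℕ) < i <;> simp [hl]

lemma syn_truncL (H : Fin r → Fin n → ZMod p × ZMod p) {i i' : ℕ} (h : i ≤ i')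
    (P : Fin n → ZMod p × ZMod p) : syn H i (truncL i' P) = syn H i P := by
  funext j
  refine Finset.sum_congr rfl fun l _ => ?_
  by_cases hl : (l : ℕ) < i
  · simp [hl, hl.trans_le h]
  · simp [hl]

lemma syn_succ_of_zero (H : Fin r → Fin n → ZMod p × ZMod p) {i : ℕ}
    {P : Fin n → ZMod p × ZMod p} (h : ∀ l : Fin n, (l : ℕ) = i → P l = 0) :
    syn H (i + 1) P = syn H i P := by
  funext j
  refine Finset.sum_congr rfl fun l _ => ?_
  rcases lt_trichotomy (l : ℕ) i with hl | hl | hl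
  · simp [hl, hl.trans (Nat.lt_succ_self i)]
  · simp [hl, h l hl]
  · simp [Nat.not_lt.2 (Nat.succ_le_of_lt hl), Nat.not_lt.2 hl.le]

lemma mem_pastSub {S : Submodule (ZMod p) (Fin n → ZMod p × ZMod p)} {i : ℕ}
    {Q : Fin n → ZMod p × ZMod p} :
    Q ∈ pastSub S i ↔ Q ∈ S ∧ ∀ l : Fin n, i ≤ (l : ℕ) → Q l = 0 := Iff.rfl

lemma mem_futureSub {S : Submodule (ZMod p) (Fin n → ZMod p × ZMod p)} {i : ℕ}
    {Q : Fin n → ZMod p × ZMod p} :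
    Q ∈ futureSub S i ↔ Q ∈ S ∧ ∀ l : Fin n, (l : ℕ) < i → Q l = 0 := Iff.rfl

end TrellisAux

section RankCard

/-- Rank–nullity for the restriction of a linear map to a submodule. -/
lemma rank_split {k M N : Type*} [Field k] [AddCommGroup M] [Module k M]
    [AddCommGroup N] [Module k N] [FiniteDimensional k M]
    (g : M →ₗ[k] N) (W : Submodule k M) :
    Module.finrank k ↥W
      = Module.finrank k ↥(W.map g) + Module.finrank k ↥(W ⊓ LinearMap.ker g) := by
  have h := LinearMap.finrank_range_add_finrank_ker (g.comp W.subtype)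
  rw [LinearMap.range_comp, Submodule.range_subtype] at h
  rw [← h]
  congr 1
  rw [LinearMap.ker_comp]
  have hc : Submodule.comap W.subtype (LinearMap.ker g)
      = Submodule.comap W.subtype (W ⊓ LinearMap.ker g) := by
    rw [Submodule.comap_inf, Submodule.comap_subtype_self, top_inf_eq]
  rw [hc]
  exact (Submodule.comapSubtypeEquivOfLe inf_le_left).finrank_eq

/-- The fiber of a linear map over a point in its image on a submodule is in
bijection with the fiber over `0`. -/
lemma fiber_card {k N V' : Type*} [Field k] [AddCommGroup N] [Module k N]
    [AddCommGroup V'] [Module k V'] (g : N →ₗ[k] V') (E : Submodule k N)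
    (v : V') (e₀ : N) (he₀ : e₀ ∈ E) (hg : g e₀ = v) :
    Nat.card {x : N | x ∈ E ∧ g x = v} = Nat.card ↥(E ⊓ LinearMap.ker g) := by
  apply Nat.card_congr
  refine ⟨fun a => ⟨a.1 - e₀, ?_⟩, fun b => ⟨b.1 + e₀, ?_⟩, ?_, ?_⟩
  · obtain ⟨ha, ha'⟩ := a.2
    exact Submodule.mem_inf.2 ⟨E.sub_mem ha he₀,
      by simp [LinearMap.mem_ker, map_sub, ha', hg]⟩
  · obtain ⟨hb, hb'⟩ := Submodule.mem_inf.1 b.2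
    rw [LinearMap.mem_ker] at hb'
    exact ⟨E.add_mem hb he₀, by simp [map_add, hb', hg]⟩
  · intro a; ext; simp
  · intro b; ext; simp

/-- Cardinality of a submodule over `ZMod p`. -/
lemma card_submodule {p : ℕ} [Fact p.Prime] {N : Type*} [AddCommGroup N]
    [Module (ZMod p) N] [Finite N] (W : Submodule (ZMod p) N) :
    Nat.card ↥W = p ^ Module.finrank (ZMod p) ↥W := by
  haveI : NeZero p := ⟨(Fact.out : p.Prime).ne_zero⟩
  haveI := Fintype.ofFinite ↥W
  rw [Nat.card_eq_fintype_card, Module.card_eq_pow_finrank (K := ZMod p), ZMod.card]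

end RankCard

section TrellisSub

variable {p n r : ℕ}
variable {S : Submodule (ZMod p) (Fin n → ZMod p × ZMod p)}
variable {H : Fin r → Fin n → ZMod p × ZMod p}

/-- The edge map: `P ↦ (source, label, terminus)`. -/
def edgeL (H : Fin r → Fin n → ZMod p × ZMod p) (i : ℕ) (hi : i < n) :
    (Fin n → ZMod p × ZMod p) →ₗ[ZMod p]
      (Fin r → ZMod p) × (ZMod p × ZMod p) × (Fin r → ZMod p) :=
  (synL H i).prod ((LinearMap.proj (⟨i, hi⟩ : Fin n)).prod (synL H (i + 1)))

@[simp] lemma edgeL_apply (i : ℕ) (hi : i < n) (P : Fin n → ZMod p × ZMod p) :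
    edgeL H i hi P = (syn H i P, P ⟨i, hi⟩, syn H (i + 1) P) := rfl

lemma edges_eq (i : ℕ) (hi : i < n) :
    trellisEdges S H i hi = ↑(S.map (edgeL H i hi)) := by
  ext e
  simp only [trellisEdges, Set.mem_setOf_eq, SetLike.mem_coe, Submodule.mem_map,
    edgeL_apply]
  constructor
  · rintro ⟨P, hP, rfl⟩; exact ⟨P, hP, rfl⟩
  · rintro ⟨P, hP, rfl⟩; exact ⟨P, hP, rfl⟩

lemma vertices_eq (i : ℕ) :
    trellisVertices S H i = ↑(S.map (synL H i)) := by
  rw [Submodule.map_coe]; rfl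

variable (hdual : ∀ P, P ∈ S ↔ ∀ j, (∑ l : Fin n, symp (H j l) (P l)) = 0)
include hdual

lemma syn_zero_of_vanish {i : ℕ} {Q : Fin n → ZMod p × ZMod p} (hQ : Q ∈ S)
    (hv : ∀ l : Fin n, i ≤ (l : ℕ) → Q l = 0) : syn H i Q = 0 := by
  funext j
  rw [Pi.zero_apply, syn_eq_full H i hv j]
  exact (hdual Q).1 hQ j

lemma trunc_mem {i : ℕ} {P : Fin n → ZMod p × ZMod p} (hP : P ∈ S)
    (h : syn H i P = 0) : truncL i P ∈ S :=
  (hdual _).2 fun j => by rw [full_truncL]; exact congrFun h j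

/-- The kernel-of-partial-syndrome subgroup maps onto `pastSub` under truncation. -/
lemma Kmap_trunc (j : ℕ) :
    (S ⊓ LinearMap.ker (synL H j)).map (truncL j) = pastSub S j := by
  ext Q
  simp only [Submodule.mem_map, Submodule.mem_inf, LinearMap.mem_ker, synL_apply,
    mem_pastSub]
  constructor
  · rintro ⟨P, ⟨hP, hsyn⟩, rfl⟩
    exact ⟨trunc_mem hdual hP hsyn, fun l hl => truncL_vanish j P hl⟩
  · rintro ⟨hQS, hQv⟩
    exact ⟨Q, ⟨hQS, syn_zero_of_vanish hdual hQS hQv⟩, truncL_eq_self hQv⟩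

lemma Kinf_trunc (j : ℕ) :
    (S ⊓ LinearMap.ker (synL H j)) ⊓ LinearMap.ker (truncL j)
      = futureSub S j := by
  ext Q
  simp only [Submodule.mem_inf, LinearMap.mem_ker, synL_apply, mem_futureSub]
  constructor
  · rintro ⟨⟨hS, _⟩, htr⟩
    refine ⟨hS, fun l hl => ?_⟩
    have := congrFun htr l
    rwa [truncL_apply, if_pos hl, Pi.zero_apply] at this
  · rintro ⟨hS, hv⟩
    refine ⟨⟨hS, ?_⟩, ?_⟩
    · funext jj
      rw [Pi.zero_apply]
      refine Finset.sum_eq_zero fun l _ => ?_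
      by_cases hl : (l : ℕ) < j <;> simp [hl, hv]
    · funext l
      by_cases hl : (l : ℕ) < j <;> simp [hl, hv]

lemma K2map_trunc (i : ℕ) (hi : i < n) :
    ((S ⊓ LinearMap.ker (synL H (i + 1)))
        ⊓ LinearMap.ker (LinearMap.proj (R := ZMod p) (⟨i, hi⟩ : Fin n))).map
      (truncL (i + 1)) = pastSub S i := by
  ext Q
  simp only [Submodule.mem_map, Submodule.mem_inf, LinearMap.mem_ker, synL_apply,
    LinearMap.proj_apply, mem_pastSub]
  constructor
  · rintro ⟨P, ⟨⟨hP, hsyn⟩, hz⟩, rfl⟩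
    refine ⟨trunc_mem hdual hP hsyn, fun l hl => ?_⟩
    rcases lt_or_eq_of_le hl with h' | h'
    · exact truncL_vanish _ P (Nat.succ_le_of_lt h')
    · have hle : l = ⟨i, hi⟩ := Fin.ext h'.symm
      rw [truncL_apply, if_pos (by omega), hle]
      exact hz
  · rintro ⟨hQS, hQv⟩
    have hv1 : ∀ l : Fin n, i + 1 ≤ (l : ℕ) → Q l = 0 := fun l hl =>
      hQv l (by omega)
    exact ⟨Q, ⟨⟨hQS, syn_zero_of_vanish hdual hQS hv1⟩, hQv _ le_rfl⟩,
      truncL_eq_self hv1⟩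

lemma K2inf_trunc (i : ℕ) (hi : i < n) :
    ((S ⊓ LinearMap.ker (synL H (i + 1)))
        ⊓ LinearMap.ker (LinearMap.proj (R := ZMod p) (⟨i, hi⟩ : Fin n)))
      ⊓ LinearMap.ker (truncL (i + 1)) = futureSub S (i + 1) := by
  rw [inf_assoc, inf_comm (LinearMap.ker (LinearMap.proj _)) _, ← inf_assoc,
    Kinf_trunc hdual (i + 1)]
  ext Q
  simp only [Submodule.mem_inf, LinearMap.mem_ker, LinearMap.proj_apply,
    mem_futureSub]
  exact ⟨fun h => h.1, fun h => ⟨h, h.2 ⟨i, hi⟩ (by simp)⟩⟩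

omit hdual

lemma K2_eq (i : ℕ) (hi : i < n) :
    (S ⊓ LinearMap.ker (synL H i))
        ⊓ LinearMap.ker (LinearMap.proj (R := ZMod p) (⟨i, hi⟩ : Fin n))
      = (S ⊓ LinearMap.ker (synL H (i + 1)))
        ⊓ LinearMap.ker (LinearMap.proj (R := ZMod p) (⟨i, hi⟩ : Fin n)) := by
  ext P
  simp only [Submodule.mem_inf, LinearMap.mem_ker, synL_apply, LinearMap.proj_apply]
  constructor
  · rintro ⟨⟨hS, hs⟩, hz⟩
    have hz' : ∀ l : Fin n, (l : ℕ) = i → P l = 0 := fun l hl => by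
      rw [show l = ⟨i, hi⟩ from Fin.ext hl]; exact hz
    exact ⟨⟨hS, by rw [syn_succ_of_zero H hz']; exact hs⟩, hz⟩
  · rintro ⟨⟨hS, hs⟩, hz⟩
    have hz' : ∀ l : Fin n, (l : ℕ) = i → P l = 0 := fun l hl => by
      rw [show l = ⟨i, hi⟩ from Fin.ext hl]; exact hz
    exact ⟨⟨hS, by rw [← syn_succ_of_zero H hz']; exact hs⟩, hz⟩

lemma Kinf_edge (i : ℕ) (hi : i < n) (j : ℕ) (hj : j = i ∨ j = i + 1) :
    (S ⊓ LinearMap.ker (synL H j)) ⊓ LinearMap.ker (edgeL H i hi)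
      = (S ⊓ LinearMap.ker (synL H j))
        ⊓ LinearMap.ker (LinearMap.proj (R := ZMod p) (⟨i, hi⟩ : Fin n)) := by
  ext P
  simp only [Submodule.mem_inf, LinearMap.mem_ker, synL_apply, LinearMap.proj_apply,
    edgeL_apply]
  constructor
  · rintro ⟨hK, hφ⟩
    exact ⟨hK, congrArg (fun x => x.2.1) hφ⟩
  · rintro ⟨⟨hS, hs⟩, hz⟩
    have hz' : ∀ l : Fin n, (l : ℕ) = i → P l = 0 := fun l hl => by
      rw [show l = ⟨i, hi⟩ from Fin.ext hl]; exact hz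
    have hsucc := syn_succ_of_zero H hz'
    have hsi : syn H i P = 0 ∧ syn H (i + 1) P = 0 := by
      rcases hj with rfl | rfl
      · exact ⟨hs, by rw [hsucc]; exact hs⟩
      · exact ⟨by rw [← hsucc]; exact hs, hs⟩
    refine ⟨⟨hS, hs⟩, ?_⟩
    rw [hsi.1, hsi.2, hz]
    rfl

lemma Einf_ker (i : ℕ) (hi : i < n)
    (π : (Fin r → ZMod p) × (ZMod p × ZMod p) × (Fin r → ZMod p) →ₗ[ZMod p]
      (Fin r → ZMod p)) (j : ℕ)
    (hπ : ∀ P, π (edgeL H i hi P) = syn H j P) :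
    (S.map (edgeL H i hi)) ⊓ LinearMap.ker π
      = (S ⊓ LinearMap.ker (synL H j)).map (edgeL H i hi) := by
  ext x
  simp only [Submodule.mem_inf, Submodule.mem_map, LinearMap.mem_ker, synL_apply]
  constructor
  · rintro ⟨⟨P, hP, rfl⟩, hx⟩
    rw [hπ P] at hx
    exact ⟨P, ⟨hP, hx⟩, rfl⟩
  · rintro ⟨P, ⟨hP, hP2⟩, rfl⟩
    exact ⟨⟨P, hP, rfl⟩, by rw [hπ P]; exact hP2⟩

lemma past_inf (i : ℕ) (hi : i < n) :
    pastSub S (i + 1) ⊓ LinearMap.ker (LinearMap.proj (R := ZMod p) (⟨i, hi⟩ : Fin n))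
      = pastSub S i := by
  ext Q
  simp only [Submodule.mem_inf, LinearMap.mem_ker, LinearMap.proj_apply, mem_pastSub]
  constructor
  · rintro ⟨⟨hS, hv⟩, hz⟩
    refine ⟨hS, fun l hl => ?_⟩
    rcases lt_or_eq_of_le hl with h' | h'
    · exact hv l (by omega)
    · rw [show l = ⟨i, hi⟩ from Fin.ext h'.symm]; exact hz
  · rintro ⟨hS, hv⟩
    exact ⟨⟨hS, fun l hl => hv l (by omega)⟩, hv _ le_rfl⟩

lemma fut_inf (i : ℕ) (hi : i < n) :
    futureSub S i ⊓ LinearMap.ker (LinearMap.proj (R := ZMod p) (⟨i, hi⟩ : Fin n))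
      = futureSub S (i + 1) := by
  ext Q
  simp only [Submodule.mem_inf, LinearMap.mem_ker, LinearMap.proj_apply, mem_futureSub]
  constructor
  · rintro ⟨⟨hS, hv⟩, hz⟩
    refine ⟨hS, fun l hl => ?_⟩
    rcases Nat.lt_or_ge (l : ℕ) i with h' | h'
    · exact hv l h'
    · have : (l : ℕ) = i := by omega
      rw [show l = ⟨i, hi⟩ from Fin.ext this]; exact hz
  · rintro ⟨hS, hv⟩
    exact ⟨⟨hS, fun l hl => hv l (by omega)⟩, hv _ (by simp)⟩

end TrellisSub

section TrellisMain

variable {p n r : ℕ} [Fact p.Prime]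
variable {S : Submodule (ZMod p) (Fin n → ZMod p × ZMod p)}
variable {H : Fin r → Fin n → ZMod p × ZMod p}

lemma past_bound (i : ℕ) (hi : i < n) :
    Module.finrank (ZMod p) ↥(pastSub S (i + 1))
      ≤ Module.finrank (ZMod p) ↥(pastSub S i) + 2 := by
  haveI : NeZero p := ⟨(Fact.out : p.Prime).ne_zero⟩
  have h := rank_split (LinearMap.proj (R := ZMod p) (⟨i, hi⟩ : Fin n))
    (pastSub S (i + 1))
  rw [past_inf i hi] at h
  have h2 : Module.finrank (ZMod p)
      ↥((pastSub S (i + 1)).map (LinearMap.proj (R := ZMod p) (⟨i, hi⟩ : Fin n)))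
      ≤ 2 := by
    have := Submodule.finrank_le
      ((pastSub S (i + 1)).map (LinearMap.proj (R := ZMod p) (⟨i, hi⟩ : Fin n)))
    simpa [Module.finrank_prod] using this
  omega

lemma fut_bound (i : ℕ) (hi : i < n) :
    Module.finrank (ZMod p) ↥(futureSub S i)
      ≤ Module.finrank (ZMod p) ↥(futureSub S (i + 1)) + 2 := by
  haveI : NeZero p := ⟨(Fact.out : p.Prime).ne_zero⟩
  have h := rank_split (LinearMap.proj (R := ZMod p) (⟨i, hi⟩ : Fin n))
    (futureSub S i)
  rw [fut_inf i hi] at h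
  have h2 : Module.finrank (ZMod p)
      ↥((futureSub S i).map (LinearMap.proj (R := ZMod p) (⟨i, hi⟩ : Fin n)))
      ≤ 2 := by
    have := Submodule.finrank_le
      ((futureSub S i).map (LinearMap.proj (R := ZMod p) (⟨i, hi⟩ : Fin n)))
    simpa [Module.finrank_prod] using this
  omega

lemma trellis_core
    (hdual : ∀ P, P ∈ S ↔ ∀ j, (∑ l : Fin n, symp (H j l) (P l)) = 0)
    (i : ℕ) (hi : i < n) (j : ℕ) (hj : j = i ∨ j = i + 1)
    (π : (Fin r → ZMod p) × (ZMod p × ZMod p) × (Fin r → ZMod p) →ₗ[ZMod p]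
      (Fin r → ZMod p))
    (hπ : ∀ P, π (edgeL H i hi P) = syn H j P)
    (v : Fin r → ZMod p) (hv : v ∈ trellisVertices S H j) :
    ∃ d : ℕ,
      Nat.card ↥{x | x ∈ trellisEdges S H i hi ∧ π x = v} = p ^ d ∧
      p ^ d = Nat.card ↥(trellisEdges S H i hi)
          / Nat.card ↥(trellisVertices S H j) ∧
      Module.finrank (ZMod p) ↥(pastSub S j) + Module.finrank (ZMod p) ↥(futureSub S j)
        = d + (Module.finrank (ZMod p) ↥(pastSub S i)
            + Module.finrank (ZMod p) ↥(futureSub S (i + 1))) := by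
  haveI : NeZero p := ⟨(Fact.out : p.Prime).ne_zero⟩
  refine ⟨Module.finrank (ZMod p)
    ↥((S.map (edgeL H i hi)) ⊓ LinearMap.ker π), ?_, ?_, ?_⟩
  · -- cardinality of the fiber
    obtain ⟨P₀, hP₀, rfl⟩ : ∃ P₀ ∈ S, synL H j P₀ = v := by
      rwa [vertices_eq, SetLike.mem_coe, Submodule.mem_map] at hv
    have hset : {x | x ∈ trellisEdges S H i hi ∧ π x = synL H j P₀}
        = {x | x ∈ (S.map (edgeL H i hi)) ∧ π x = synL H j P₀} := by
      rw [edges_eq]; rfl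
    rw [hset, fiber_card π (S.map (edgeL H i hi)) (synL H j P₀) (edgeL H i hi P₀)
      (Submodule.mem_map_of_mem hP₀) (by rw [hπ P₀]; rfl)]
    exact card_submodule _
  · -- quotient formula
    have hE : Nat.card ↥(trellisEdges S H i hi)
        = p ^ Module.finrank (ZMod p) ↥(S.map (edgeL H i hi)) := by
      rw [edges_eq, SetLike.coe_sort_coe]
      exact card_submodule _
    have hV : Nat.card ↥(trellisVertices S H j)
        = p ^ Module.finrank (ZMod p) ↥(S.map (synL H j)) := by
      rw [vertices_eq, SetLike.coe_sort_coe]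
      exact card_submodule _
    have hmap : (S.map (edgeL H i hi)).map π = S.map (synL H j) := by
      rw [← Submodule.map_comp]
      congr 1
      exact LinearMap.ext fun P => hπ P
    have hsplit := rank_split π (S.map (edgeL H i hi))
    rw [hmap] at hsplit
    rw [hE, hV, hsplit, pow_add,
      Nat.mul_div_cancel_left _ (pow_pos (Fact.out : p.Prime).pos _)]
  · -- dimension bookkeeping
    have h1 : (S.map (edgeL H i hi)) ⊓ LinearMap.ker π
        = (S ⊓ LinearMap.ker (synL H j)).map (edgeL H i hi) := Einf_ker i hi π j hπ
    have h2 := rank_split (edgeL H i hi) (S ⊓ LinearMap.ker (synL H j))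
    have h3 : (S ⊓ LinearMap.ker (synL H j)) ⊓ LinearMap.ker (edgeL H i hi)
        = (S ⊓ LinearMap.ker (synL H (i + 1)))
          ⊓ LinearMap.ker (LinearMap.proj (R := ZMod p) (⟨i, hi⟩ : Fin n)) := by
      rw [Kinf_edge i hi j hj]
      rcases hj with h | h
      · rw [h]; exact K2_eq i hi
      · rw [h]
    have h4 := rank_split (truncL j) (S ⊓ LinearMap.ker (synL H j))
    rw [Kmap_trunc hdual j, Kinf_trunc hdual j] at h4
    have h5 := rank_split (truncL (i + 1))
      ((S ⊓ LinearMap.ker (synL H (i + 1)))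
        ⊓ LinearMap.ker (LinearMap.proj (R := ZMod p) (⟨i, hi⟩ : Fin n)))
    rw [K2map_trunc hdual i hi, K2inf_trunc hdual i hi] at h5
    rw [h1]
    rw [h3] at h2
    omega

end TrellisMain

/-- In the minimal syndrome trellis of a stabilizer code (`S` here is the symplectic
dual `S⊥` of the row span of `H`), every vertex at a given depth has the same
incoming degree `|E_i|/|V_i| = p^(dim 𝔭-dim 𝔭')` and the same outgoing degree
`|E_{i+1}|/|V_i| = p^(dim 𝔣-dim 𝔣')`; each degree lies in `{1, p, p²}`. -/
theorem stmt8 (p n r : ℕ) [Fact p.Prime]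
    (S : Submodule (ZMod p) (Fin n → ZMod p × ZMod p))
    (H : Fin r → Fin n → ZMod p × ZMod p)
    (hdual : ∀ P, P ∈ S ↔ ∀ j, (∑ l : Fin n, symp (H j l) (P l)) = 0) :
    (∀ i (hi : i < n), ∀ v ∈ trellisVertices S H (i + 1),
      Nat.card ↥{e ∈ trellisEdges S H i hi | e.2.2 = v}
          = Nat.card ↥(trellisEdges S H i hi) / Nat.card ↥(trellisVertices S H (i + 1)) ∧
      Nat.card ↥{e ∈ trellisEdges S H i hi | e.2.2 = v}
          = p ^ (Module.finrank (ZMod p) ↥(pastSub S (i + 1))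
              - Module.finrank (ZMod p) ↥(pastSub S i)) ∧
      Nat.card ↥{e ∈ trellisEdges S H i hi | e.2.2 = v} ∈ ({1, p, p ^ 2} : Set ℕ)) ∧
    (∀ i (hi : i < n), ∀ v ∈ trellisVertices S H i,
      Nat.card ↥{e ∈ trellisEdges S H i hi | e.1 = v}
          = Nat.card ↥(trellisEdges S H i hi) / Nat.card ↥(trellisVertices S H i) ∧
      Nat.card ↥{e ∈ trellisEdges S H i hi | e.1 = v}
          = p ^ (Module.finrank (ZMod p) ↥(futureSub S i)
              - Module.finrank (ZMod p) ↥(futureSub S (i + 1))) ∧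
      Nat.card ↥{e ∈ trellisEdges S H i hi | e.1 = v} ∈ ({1, p, p ^ 2} : Set ℕ)) := by
  haveI : NeZero p := ⟨(Fact.out : p.Prime).ne_zero⟩
  constructor
  · intro i hi v hv
    obtain ⟨d, hc, hdiv, hrank⟩ := trellis_core hdual i hi (i + 1) (Or.inr rfl)
      ((LinearMap.snd (ZMod p) (ZMod p × ZMod p) (Fin r → ZMod p)).comp
        (LinearMap.snd (ZMod p) (Fin r → ZMod p) _)) (fun P => rfl) v hv
    have hfib : {e ∈ trellisEdges S H i hi | e.2.2 = v}
        = {x | x ∈ trellisEdges S H i hi ∧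
            ((LinearMap.snd (ZMod p) (ZMod p × ZMod p) (Fin r → ZMod p)).comp
              (LinearMap.snd (ZMod p) (Fin r → ZMod p) _)) x = v} := rfl
    rw [hfib, hc]
    have hb := past_bound (S := S) i hi
    have hd2 : d ≤ 2 := by omega
    refine ⟨hdiv, ?_, ?_⟩
    · congr 1
      omega
    · have hd : d = 0 ∨ d = 1 ∨ d = 2 := by omega
      rcases hd with rfl | rfl | rfl <;> simp [Set.mem_insert_iff]
  · intro i hi v hv
    obtain ⟨d, hc, hdiv, hrank⟩ := trellis_core hdual i hi i (Or.inl rfl)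
      (LinearMap.fst (ZMod p) (Fin r → ZMod p) _) (fun P => rfl) v hv
    have hfib : {e ∈ trellisEdges S H i hi | e.1 = v}
        = {x | x ∈ trellisEdges S H i hi ∧
            (LinearMap.fst (ZMod p) (Fin r → ZMod p) _) x = v} := rfl
    rw [hfib, hc]
    have hb := fut_bound (S := S) i hi
    have hd2 : d ≤ 2 := by omega
    refine ⟨hdiv, ?_, ?_⟩
    · congr 1
      omega
    · have hd : d = 0 ∨ d = 1 ∨ d = 2 := by omega
      rcases hd with rfl | rfl | rfl <;> simp [Set.mem_insert_iff]
end

section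
/- Any two minimal trellises for the same stabilizer code (with the same qudit ordering) are isomorphic as labeled directed multigraphs: there is a bijection f between vertex sets at each depth such that (s, P, t) is an edge iff (f(s), P, f(t)) is an edge. -/
variable {p n : ℕ}

/-- An abstract trellis: layered vertex types `V 0, …, V n` with labeled edge sets
between consecutive layers. -/
structure Trellis (n : ℕ) (Lbl : Type*) where
  V : Fin (n + 1) → Type
  E : (i : Fin n) → Set (V i.castSucc × Lbl × V i.succ)

/-- `vs` is a length-`n` path in `T` whose edge labels are `P`. -/
def Trellis.IsPath {n : ℕ} {Lbl : Type*} (T : Trellis n Lbl)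
    (vs : (i : Fin (n + 1)) → T.V i) (P : Fin n → Lbl) : Prop :=
  ∀ i : Fin n, (vs i.castSucc, P i, vs i.succ) ∈ T.E i

/-- `T` represents the label code `D`: length-`n` paths of `T` are in bijection
with the elements of `D` via their edge labels. -/
def Trellis.Represents {n : ℕ} {Lbl : Type*} (T : Trellis n Lbl)
    (D : Set (Fin n → Lbl)) : Prop :=
  ∀ P : Fin n → Lbl,
    (P ∈ D → ∃! vs : (i : Fin (n + 1)) → T.V i, T.IsPath vs P) ∧
    (P ∉ D → ¬∃ vs : (i : Fin (n + 1)) → T.V i, T.IsPath vs P)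

/-- A trellis for the code `S⊥` is minimal if its state and branch space sizes meet
the lower bounds `|V_i| = p^(dim S⊥ − dim S⊥_{𝔭_i} − dim S⊥_{𝔣_i})` and
`|E_i| = p^(dim S⊥ − dim S⊥_{𝔭_{i−1}} − dim S⊥_{𝔣_i})`. -/
def Trellis.Minimal {p n : ℕ} (T : Trellis n (ZMod p × ZMod p))
    (S : Submodule (ZMod p) (Fin n → ZMod p × ZMod p)) : Prop :=
  (∀ i : Fin (n + 1),
    Nat.card (T.V i) =
      p ^ (Module.finrank (ZMod p) ↥S - Module.finrank (ZMod p) ↥(pastSub S i)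
            - Module.finrank (ZMod p) ↥(futureSub S i))) ∧
  (∀ i : Fin n,
    Nat.card ↥(T.E i) =
      p ^ (Module.finrank (ZMod p) ↥S - Module.finrank (ZMod p) ↥(pastSub S i)
            - Module.finrank (ZMod p) ↥(futureSub S ((i : ℕ) + 1))))

/-- Generic pigeonhole equiv construction. -/
lemma equiv_of_card_aux {α β γ : Type*} [Finite β] [Finite γ] (f : α → β) (g : α → γ)
    (hf : Function.Surjective f) (h : ∀ a a', g a = g a' → f a = f a')
    (hcard : Nat.card β = Nat.card γ) :
    ∃ e : β ≃ γ, ∀ a, e (f a) = g a := by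
  classical
  set R : Set (β × γ) := Set.range (fun a => (f a, g a)) with hR
  let fstR : R → β := fun r => r.1.1
  let sndR : R → γ := fun r => r.1.2
  have hsur : Function.Surjective fstR := by
    intro b
    obtain ⟨a, rfl⟩ := hf b
    exact ⟨⟨(f a, g a), ⟨a, rfl⟩⟩, rfl⟩
  have hinj : Function.Injective sndR := by
    rintro ⟨r, a, rfl⟩ ⟨r', a', rfl⟩ hgg
    have : g a = g a' := hgg
    have hff := h a a' this
    simp only [Subtype.mk.injEq, Prod.mk.injEq]
    exact Subtype.ext (Prod.ext hff this)
  have c1 : Nat.card β ≤ Nat.card R := Nat.card_le_card_of_surjective fstR hsur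
  have c2 : Nat.card R ≤ Nat.card γ := Nat.card_le_card_of_injective sndR hinj
  have bij1 : Function.Bijective fstR :=
    (Nat.bijective_iff_surjective_and_card fstR).mpr ⟨hsur, by omega⟩
  have bij2 : Function.Bijective sndR :=
    (Nat.bijective_iff_injective_and_card sndR).mpr ⟨hinj, by omega⟩
  refine ⟨(Equiv.ofBijective _ bij1).symm.trans (Equiv.ofBijective _ bij2), fun a => ?_⟩
  have key : (Equiv.ofBijective _ bij1).symm (f a) = ⟨(f a, g a), ⟨a, rfl⟩⟩ := by
    rw [Equiv.symm_apply_eq]; rfl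
  simp [key, Equiv.trans_apply, Equiv.ofBijective_apply, sndR]

lemma card_quot_eq [Fact p.Prime] (S P F : Submodule (ZMod p) (Fin n → ZMod p × ZMod p))
    (hP : P ≤ S) (hF : F ≤ S) (hPF : P ⊓ F = ⊥) :
    Nat.card (↥S ⧸ (P ⊔ F).comap S.subtype) =
      p ^ (Module.finrank (ZMod p) ↥S - Module.finrank (ZMod p) ↥P
            - Module.finrank (ZMod p) ↥F) := by
  classical
  haveI : NeZero p := ⟨(Fact.out (p := p.Prime)).ne_zero⟩
  haveI : Module.Finite (ZMod p) (Fin n → ZMod p × ZMod p) :=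
    Module.finite_iff_finite.mpr inferInstance
  set W := (P ⊔ F).comap S.subtype with hW
  have h1 : Module.finrank (ZMod p) ↥W = Module.finrank (ZMod p) ↥(P ⊔ F) :=
    LinearEquiv.finrank_eq (Submodule.comapSubtypeEquivOfLe (sup_le hP hF))
  have h2 : Module.finrank (ZMod p) ↥(P ⊔ F) + Module.finrank (ZMod p) ↥(P ⊓ F)
      = Module.finrank (ZMod p) ↥P + Module.finrank (ZMod p) ↥F :=
    Submodule.finrank_sup_add_finrank_inf_eq P F
  have h2' : Module.finrank (ZMod p) ↥(P ⊓ F) = 0 := by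
    rw [hPF]; exact finrank_bot (ZMod p) _
  have h3 : Module.finrank (ZMod p) (↥S ⧸ W) + Module.finrank (ZMod p) ↥W
      = Module.finrank (ZMod p) ↥S := Submodule.finrank_quotient_add_finrank W
  haveI : Fintype (↥S ⧸ W) := Fintype.ofFinite _
  have h4 : Fintype.card (↥S ⧸ W) = Fintype.card (ZMod p) ^ Module.finrank (ZMod p) (↥S ⧸ W) :=
    Module.card_eq_pow_finrank
  rw [Nat.card_eq_fintype_card, h4, ZMod.card]
  congr 1
  omega


lemma splice_mem {n : ℕ} {Lbl : Type*} (D : Set (Fin n → Lbl))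
    (T : Trellis n Lbl) (hT : T.Represents D)
    {s t : Fin n → Lbl} (_hs : s ∈ D) (_ht : t ∈ D)
    {πs πt : (i : Fin (n + 1)) → T.V i} (hπs : T.IsPath πs s) (hπt : T.IsPath πt t)
    (i : Fin (n + 1)) (hmid : πs i = πt i) :
    (fun j : Fin n => if (j : ℕ) < (i : ℕ) then s j else t j) ∈ D := by
  classical
  by_contra hu
  refine (hT _).2 hu ⟨fun j => if h : (j : ℕ) < (i : ℕ) then πs j else πt j, ?_⟩
  intro k
  by_cases hk : (k : ℕ) < (i : ℕ)
  · by_cases hk1 : (k : ℕ) + 1 < (i : ℕ)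
    · have e1 : ((k.castSucc : Fin (n+1)) : ℕ) < (i : ℕ) := by simp; omega
      have e2 : ((k.succ : Fin (n+1)) : ℕ) < (i : ℕ) := by simp; omega
      simpa only [dif_pos e1, dif_pos e2, if_pos hk] using hπs k
    · have heq : k.succ = i := Fin.ext (by simp; omega)
      subst heq
      have e1 : ((k.castSucc : Fin (n+1)) : ℕ) < ((k.succ : Fin (n+1)) : ℕ) := by simp
      have e2 : ¬ ((k.succ : Fin (n+1)) : ℕ) < ((k.succ : Fin (n+1)) : ℕ) := lt_irrefl _
      simp only [dif_pos e1, dif_neg e2, if_pos hk, ← hmid]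
      exact hπs k
  · have hk1 : ¬ ((k : ℕ) + 1 < (i : ℕ)) := by omega
    have e1 : ¬ ((k.castSucc : Fin (n+1)) : ℕ) < (i : ℕ) := by simp; omega
    have e2 : ¬ ((k.succ : Fin (n+1)) : ℕ) < (i : ℕ) := by simp; omega
    simpa only [dif_neg e1, dif_neg e2, if_neg hk] using hπt k


lemma trellis_data (p n : ℕ) [Fact p.Prime]
    (S : Submodule (ZMod p) (Fin n → ZMod p × ZMod p))
    (T : Trellis n (ZMod p × ZMod p))
    (hT : T.Represents (S : Set (Fin n → ZMod p × ZMod p)))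
    (hmT : T.Minimal S) :
    ∃ σ : ↥S → (i : Fin (n + 1)) → T.V i,
      (∃ eV : (i : Fin (n + 1)) →
          (↥S ⧸ (pastSub S i ⊔ futureSub S i).comap S.subtype) ≃ T.V i,
        ∀ (s : ↥S) (i : Fin (n + 1)), eV i (Submodule.Quotient.mk s) = σ s i) ∧
      (∀ (s : ↥S) (i : Fin n),
        (σ s i.castSucc, (s : Fin n → ZMod p × ZMod p) i, σ s i.succ) ∈ T.E i) ∧
      (∀ (i : Fin n) (x : T.V i.castSucc × (ZMod p × ZMod p) × T.V i.succ), x ∈ T.E i →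
        ∃ s : ↥S, (σ s i.castSucc, (s : Fin n → ZMod p × ZMod p) i, σ s i.succ) = x) := by
  classical
  haveI : NeZero p := ⟨(Fact.out (p := p.Prime)).ne_zero⟩
  have hp0 : p ≠ 0 := (Fact.out (p := p.Prime)).ne_zero
  -- choose paths
  have hex : ∀ s : ↥S, ∃ vs : (i : Fin (n + 1)) → T.V i, T.IsPath vs ↑s :=
    fun s => ((hT ↑s).1 s.2).exists
  set σ : ↥S → (i : Fin (n + 1)) → T.V i := fun s => (hex s).choose with hσ
  have σpath : ∀ s : ↥S, T.IsPath (σ s) ↑s := fun s => (hex s).choose_spec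
  -- fiber lemma for vertices
  have fibV : ∀ (i : Fin (n + 1)) (s t : ↥S), σ s i = σ t i →
      (Submodule.Quotient.mk s : ↥S ⧸ (pastSub S i ⊔ futureSub S i).comap S.subtype)
        = Submodule.Quotient.mk t := by
    intro i s t hmid
    have hu : (fun j : Fin n => if (j : ℕ) < (i : ℕ) then (s : Fin n → ZMod p × ZMod p) j
        else (t : Fin n → ZMod p × ZMod p) j) ∈ S :=
      splice_mem (S : Set (Fin n → ZMod p × ZMod p)) T hT s.2 t.2 (σpath s) (σpath t) i hmid
    set u : Fin n → ZMod p × ZMod p := fun j => if (j : ℕ) < (i : ℕ)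
        then (s : Fin n → ZMod p × ZMod p) j else (t : Fin n → ZMod p × ZMod p) j with hu'
    rw [Submodule.Quotient.eq, Submodule.mem_comap]
    refine Submodule.mem_sup.mpr ⟨u - ↑t, ⟨S.sub_mem hu t.2, fun j hj => ?_⟩,
      ↑s - u, ⟨S.sub_mem s.2 hu, fun j hj => ?_⟩, ?_⟩
    · simp only [Pi.sub_apply, hu', if_neg (not_lt.mpr hj), sub_self]
    · simp only [Pi.sub_apply, hu', if_pos hj, sub_self]
    · show _ = S.subtype (s - t)
      simp
  -- fiber lemma for edges
  have fibE : ∀ (i : Fin n) (s t : ↥S), σ s i.castSucc = σ t i.castSucc →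
      (s : Fin n → ZMod p × ZMod p) i = (t : Fin n → ZMod p × ZMod p) i →
      (Submodule.Quotient.mk s :
          ↥S ⧸ (pastSub S i ⊔ futureSub S ((i : ℕ) + 1)).comap S.subtype)
        = Submodule.Quotient.mk t := by
    intro i s t hmid hlbl
    have hu : (fun j : Fin n => if (j : ℕ) < ((i.castSucc : Fin (n+1)) : ℕ)
        then (s : Fin n → ZMod p × ZMod p) j else (t : Fin n → ZMod p × ZMod p) j) ∈ S :=
      splice_mem (S : Set (Fin n → ZMod p × ZMod p)) T hT s.2 t.2 (σpath s) (σpath t)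
        i.castSucc hmid
    rw [Fin.coe_castSucc] at hu
    set u : Fin n → ZMod p × ZMod p := fun j => if (j : ℕ) < (i : ℕ)
        then (s : Fin n → ZMod p × ZMod p) j else (t : Fin n → ZMod p × ZMod p) j with hu'
    rw [Submodule.Quotient.eq, Submodule.mem_comap]
    refine Submodule.mem_sup.mpr ⟨u - ↑t, ⟨S.sub_mem hu t.2, fun j hj => ?_⟩,
      ↑s - u, ⟨S.sub_mem s.2 hu, fun j hj => ?_⟩, ?_⟩
    · simp only [Pi.sub_apply, hu', if_neg (not_lt.mpr hj), sub_self]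
    · rcases lt_or_ge (j : ℕ) (i : ℕ) with h | h
      · simp only [Pi.sub_apply, hu', if_pos h, sub_self]
      · have hji : j = i := Fin.ext (by omega)
        subst hji
        simp only [Pi.sub_apply, hu', if_neg (lt_irrefl _), hlbl, sub_self]
    · show _ = S.subtype (s - t)
      simp
  -- intersections are trivial
  have hPV : ∀ i : ℕ, pastSub S i ≤ S := fun i v hv => hv.1
  have hFV : ∀ i : ℕ, futureSub S i ≤ S := fun i v hv => hv.1
  have hinfV : ∀ i : ℕ, pastSub S i ⊓ futureSub S i = ⊥ := by
    intro i
    refine le_antisymm (fun v hv => ?_) bot_le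
    rw [Submodule.mem_bot]
    funext j
    rcases lt_or_ge (j : ℕ) i with h | h
    · exact hv.2.2 j h
    · exact hv.1.2 j h
  have hinfE : ∀ i : ℕ, pastSub S i ⊓ futureSub S (i + 1) = ⊥ := by
    intro i
    refine le_antisymm (fun v hv => ?_) bot_le
    rw [Submodule.mem_bot]
    funext j
    rcases lt_or_ge (j : ℕ) (i + 1) with h | h
    · exact hv.2.2 j h
    · exact hv.1.2 j (by omega)
  -- finiteness
  haveI : ∀ i : Fin (n + 1), Finite (T.V i) := fun i =>
    Nat.finite_of_card_ne_zero (by rw [hmT.1 i]; exact pow_ne_zero _ hp0)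
  haveI : ∀ i : Fin n, Finite ↥(T.E i) := fun i =>
    Nat.finite_of_card_ne_zero (by rw [hmT.2 i]; exact pow_ne_zero _ hp0)
  -- vertex equivs
  have hV : ∀ i : Fin (n + 1),
      ∃ e : (↥S ⧸ (pastSub S i ⊔ futureSub S i).comap S.subtype) ≃ T.V i,
        ∀ s : ↥S, e (Submodule.Quotient.mk s) = σ s i := by
    intro i
    exact equiv_of_card_aux _ (fun s => σ s i) (Submodule.Quotient.mk_surjective _)
      (fibV i)
      (by rw [card_quot_eq S _ _ (hPV i) (hFV i) (hinfV i)]; exact (hmT.1 i).symm)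
  -- edge equivs
  have hEq : ∀ i : Fin n,
      ∃ e : (↥S ⧸ (pastSub S i ⊔ futureSub S ((i : ℕ) + 1)).comap S.subtype) ≃ ↥(T.E i),
        ∀ s : ↥S, e (Submodule.Quotient.mk s)
          = ⟨(σ s i.castSucc, (s : Fin n → ZMod p × ZMod p) i, σ s i.succ), σpath s i⟩ := by
    intro i
    refine equiv_of_card_aux _
      (fun s => (⟨(σ s i.castSucc, (s : Fin n → ZMod p × ZMod p) i, σ s i.succ),
        σpath s i⟩ : ↥(T.E i)))
      (Submodule.Quotient.mk_surjective _) ?_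
      (by rw [card_quot_eq S _ _ (hPV i) (hFV ((i : ℕ) + 1)) (hinfE i)]; exact (hmT.2 i).symm)
    intro s t hst
    rw [Subtype.mk.injEq, Prod.mk.injEq, Prod.mk.injEq] at hst
    exact fibE i s t hst.1 hst.2.1
  choose eE heE using hEq
  choose eV heV using hV
  refine ⟨σ, ⟨eV, fun s i => heV i s⟩, fun s i => σpath s i, fun i x hx => ?_⟩
  obtain ⟨q, hq⟩ := (eE i).surjective ⟨x, hx⟩
  obtain ⟨s, rfl⟩ := Submodule.Quotient.mk_surjective _ q
  refine ⟨s, ?_⟩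
  have := (heE i s).symm.trans hq
  exact congrArg Subtype.val this

/-- Any two minimal trellises for the same stabilizer code (same qudit ordering) are
isomorphic as labeled directed multigraphs. -/
theorem stmt9 (p n : ℕ) [Fact p.Prime]
    (S : Submodule (ZMod p) (Fin n → ZMod p × ZMod p))
    (T T' : Trellis n (ZMod p × ZMod p))
    (hT : T.Represents (S : Set (Fin n → ZMod p × ZMod p)))
    (hT' : T'.Represents (S : Set (Fin n → ZMod p × ZMod p)))
    (hmT : T.Minimal S) (hmT' : T'.Minimal S) :
    ∃ f : (i : Fin (n + 1)) → T.V i ≃ T'.V i,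
      ∀ (i : Fin n) (s : T.V i.castSucc) (ℓ : ZMod p × ZMod p) (t : T.V i.succ),
        (s, ℓ, t) ∈ T.E i ↔ (f i.castSucc s, ℓ, f i.succ t) ∈ T'.E i := by
  obtain ⟨σ, ⟨eV, heV⟩, hpath, hsurj⟩ := trellis_data p n S T hT hmT
  obtain ⟨σ', ⟨eV', heV'⟩, hpath', hsurj'⟩ := trellis_data p n S T' hT' hmT'
  refine ⟨fun i => (eV i).symm.trans (eV' i), ?_⟩
  have key : ∀ (s : ↥S) (i : Fin (n + 1)),
      ((eV i).symm.trans (eV' i)) (σ s i) = σ' s i := by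
    intro s i
    rw [← heV s i, Equiv.trans_apply, Equiv.symm_apply_apply, heV' s i]
  intro i s ℓ t
  constructor
  · intro h
    obtain ⟨w, hw⟩ := hsurj i (s, ℓ, t) h
    simp only [Prod.mk.injEq] at hw
    obtain ⟨h1, h2, h3⟩ := hw
    rw [← h1, ← h2, ← h3, key, key]
    exact hpath' w i
  · intro h
    obtain ⟨w, hw⟩ := hsurj' i
      (((eV i.castSucc).symm.trans (eV' i.castSucc)) s, ℓ,
        ((eV i.succ).symm.trans (eV' i.succ)) t) h
    simp only [Prod.mk.injEq] at hw
    obtain ⟨h1, h2, h3⟩ := hw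
    rw [← key] at h1 h3
    have hs : σ w i.castSucc = s := ((eV i.castSucc).symm.trans (eV' i.castSucc)).injective h1
    have ht : σ w i.succ = t := ((eV i.succ).symm.trans (eV' i.succ)).injective h3
    rw [← hs, ← ht, ← h2]
    exact hpath w i
end

section
/- Let |E_X| = Σ_{i=1}^n p^{ξ_i} and |E_Z| = Σ_{i=1}^n p^{η_i} with all ξ_i, η_i ≥ 1 integers, and let |E| = Σ_{i=1}^n p^{ξ_i + η_i}. Then |E_X| + |E_Z| ≤ |E| ≤ |E_X|·|E_Z| − p²·n(n − 1). -/
/-- CSS edge-count bounds: with `|E_X| = Σ p^ξᵢ`, `|E_Z| = Σ p^ηᵢ` (all `ξᵢ, ηᵢ ≥ 1`)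
and `|E| = Σ p^(ξᵢ+ηᵢ)`, one has `|E_X| + |E_Z| ≤ |E| ≤ |E_X|·|E_Z| − p²·n(n−1)`. -/
theorem stmt15 (p n : ℕ) (hp : 2 ≤ p) (hn : 1 ≤ n)
    (ξ η : Fin n → ℕ) (hξ : ∀ i, 1 ≤ ξ i) (hη : ∀ i, 1 ≤ η i) :
    (∑ i, p ^ ξ i) + (∑ i, p ^ η i) ≤ ∑ i, p ^ (ξ i + η i) ∧
    ((∑ i, p ^ (ξ i + η i) : ℕ) : ℤ)
      ≤ ((∑ i, p ^ ξ i : ℕ) : ℤ) * ((∑ i, p ^ η i : ℕ) : ℤ)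
          - (p : ℤ) ^ 2 * (n : ℤ) * ((n : ℤ) - 1) := by
  have hle : ∀ k : ℕ, 1 ≤ k → p ≤ p ^ k := fun k hk =>
    Nat.le_self_pow (Nat.one_le_iff_ne_zero.mp hk) p
  constructor
  · rw [← Finset.sum_add_distrib]
    refine Finset.sum_le_sum fun i _ => ?_
    rw [pow_add]
    exact Nat.add_le_mul (hp.trans (hle _ (hξ i))) (hp.trans (hle _ (hη i)))
  · have h1 : ∀ i : Fin n, p ^ (ξ i + η i) + p ^ 2 * (n - 1) ≤ ∑ j, p ^ ξ i * p ^ η j := by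
      intro i
      rw [← Finset.add_sum_erase _ _ (Finset.mem_univ i)]
      refine add_le_add (by rw [pow_add]) ?_
      have hcard : (Finset.univ.erase i).card = n - 1 := by
        rw [Finset.card_erase_of_mem (Finset.mem_univ i), Finset.card_univ,
          Fintype.card_fin]
      calc p ^ 2 * (n - 1) = ∑ _j ∈ Finset.univ.erase i, p ^ 2 := by
            rw [Finset.sum_const, hcard, smul_eq_mul, mul_comm]
        _ ≤ _ := Finset.sum_le_sum fun j _ => by
            rw [sq]
            exact Nat.mul_le_mul (hle _ (hξ i)) (hle _ (hη j))
    have key : (∑ i, p ^ (ξ i + η i)) + n * (p ^ 2 * (n - 1))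
        ≤ (∑ i, p ^ ξ i) * (∑ i, p ^ η i) := by
      rw [Finset.sum_mul_sum]
      calc (∑ i, p ^ (ξ i + η i)) + n * (p ^ 2 * (n - 1))
          = ∑ i : Fin n, (p ^ (ξ i + η i) + p ^ 2 * (n - 1)) := by
            rw [Finset.sum_add_distrib, Finset.sum_const, Finset.card_univ,
              Fintype.card_fin, smul_eq_mul]
        _ ≤ _ := Finset.sum_le_sum fun i _ => h1 i
    have := (Nat.cast_le (α := ℤ)).mpr key
    push_cast [Nat.cast_sub hn] at this ⊢
    linarith
end

section
/- In a minimal syndrome trellis, fix an edge e ∈ E_i and let I_i ⊆ V_i be the set of sources of edges with terminus t(e), and I_{i+1} ⊆ V_{i+1} the set of termini of edges with source s(e). Then every vertex of I_i is connected by an edge to every vertex of I_{i+1} (complete bipartite connection), and no vertex outside I_i (resp. I_{i+1}) has an edge to a vertex of I_{i+1} (resp. from a vertex of I_i). Moreover, if any pair of vertices in section E_i is joined by k parallel edges (same endpoints, distinct labels), then every connected pair in E_i is joined by exactly k parallel edges. -/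
lemma syn_add {p n r : ℕ} (H : Fin r → Fin n → ZMod p × ZMod p) (i : ℕ)
    (P Q : Fin n → ZMod p × ZMod p) :
    syn H i (P + Q) = syn H i P + syn H i Q := by
  funext j
  simp only [syn, Pi.add_apply, ← Finset.sum_add_distrib]
  apply Finset.sum_congr rfl
  intro l _
  split_ifs
  · simp only [symp, Prod.snd_add, Prod.fst_add]; ring
  · simp

lemma syn_sub {p n r : ℕ} (H : Fin r → Fin n → ZMod p × ZMod p) (i : ℕ)
    (P Q : Fin n → ZMod p × ZMod p) :
    syn H i (P - Q) = syn H i P - syn H i Q := by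
  funext j
  simp only [syn, Pi.sub_apply, ← Finset.sum_sub_distrib]
  apply Finset.sum_congr rfl
  intro l _
  split_ifs
  · simp only [symp, Prod.snd_sub, Prod.fst_sub]; ring
  · simp

lemma edge_shift {p n r : ℕ} {S : Submodule (ZMod p) (Fin n → ZMod p × ZMod p)}
    {H : Fin r → Fin n → ZMod p × ZMod p} {i : ℕ} {hi : i < n}
    {e1 e2 e3 : (Fin r → ZMod p) × (ZMod p × ZMod p) × (Fin r → ZMod p)}
    (h1 : e1 ∈ trellisEdges S H i hi) (h2 : e2 ∈ trellisEdges S H i hi)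
    (h3 : e3 ∈ trellisEdges S H i hi) :
    (e1.1 + e2.1 - e3.1, e1.2.1 + e2.2.1 - e3.2.1, e1.2.2 + e2.2.2 - e3.2.2) ∈
      trellisEdges S H i hi := by
  obtain ⟨P1, hP1, rfl⟩ := h1
  obtain ⟨P2, hP2, rfl⟩ := h2
  obtain ⟨P3, hP3, rfl⟩ := h3
  exact ⟨P1 + P2 - P3, sub_mem (add_mem hP1 hP2) hP3, by
    simp [syn_add, syn_sub, Prod.ext_iff]⟩

/-- Bipartite edge-configuration structure of the syndrome trellis: for an edge `e`
in section `i`, the sources `I_i` of edges sharing its terminus and the termini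
`I_{i+1}` of edges sharing its source form a completely connected bipartite graph,
no outside vertex connects to them, and if any pair of vertices is joined by `k`
parallel edges then every connected pair in the section is joined by exactly `k`
parallel edges. (`S` is the symplectic dual of the row span of `H`.) -/
theorem stmt17 (p n r : ℕ) [Fact p.Prime]
    (S : Submodule (ZMod p) (Fin n → ZMod p × ZMod p))
    (H : Fin r → Fin n → ZMod p × ZMod p)
    (hdual : ∀ P, P ∈ S ↔ ∀ j, (∑ l : Fin n, symp (H j l) (P l)) = 0)
    (i : ℕ) (hi : i < n)
    (e : (Fin r → ZMod p) × (ZMod p × ZMod p) × (Fin r → ZMod p))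
    (he : e ∈ trellisEdges S H i hi) :
    let Ii : Set (Fin r → ZMod p) :=
      {v | ∃ e' ∈ trellisEdges S H i hi, e'.2.2 = e.2.2 ∧ e'.1 = v}
    let Ii1 : Set (Fin r → ZMod p) :=
      {w | ∃ e' ∈ trellisEdges S H i hi, e'.1 = e.1 ∧ e'.2.2 = w}
    (∀ v ∈ Ii, ∀ w ∈ Ii1, ∃ ℓ, (v, ℓ, w) ∈ trellisEdges S H i hi) ∧
    (∀ e' ∈ trellisEdges S H i hi,
      (e'.2.2 ∈ Ii1 → e'.1 ∈ Ii) ∧ (e'.1 ∈ Ii → e'.2.2 ∈ Ii1)) ∧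
    (∀ (k : ℕ) (v w v' w' : Fin r → ZMod p),
      (∃ ℓ, (v, ℓ, w) ∈ trellisEdges S H i hi) →
      Nat.card ↥{ℓ | (v, ℓ, w) ∈ trellisEdges S H i hi} = k →
      (∃ ℓ, (v', ℓ, w') ∈ trellisEdges S H i hi) →
      Nat.card ↥{ℓ | (v', ℓ, w') ∈ trellisEdges S H i hi} = k) := by
  intro Ii Ii1
  refine ⟨?_, ?_, ?_⟩
  · rintro v ⟨f, hf, hft, hfs⟩ w ⟨g, hg, hgs, hgt⟩
    have := edge_shift hf hg he
    refine ⟨f.2.1 + g.2.1 - e.2.1, ?_⟩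
    rw [hft, hfs, hgs, hgt] at this
    simpa using this
  · rintro e' he'
    constructor
    · rintro ⟨f, hf, hfs, hft⟩
      have := edge_shift he' he hf
      rw [hfs, hft] at this
      exact ⟨_, this, by simp, by simp⟩
    · rintro ⟨g, hg, hgt, hgs⟩
      have := edge_shift he' he hg
      rw [hgt, hgs] at this
      exact ⟨_, this, by simp, by simp⟩
  · rintro k v w v' w' ⟨l, hl⟩ hk ⟨l', hl'⟩
    rw [← hk]
    apply Nat.card_congr
    refine ⟨fun x => ⟨x.1 + l - l', ?_⟩, fun x => ⟨x.1 + l' - l, ?_⟩,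
      fun x => Subtype.ext (by module), fun x => Subtype.ext (by module)⟩
    · have := edge_shift x.2 hl hl'
      simpa using this
    · have := edge_shift x.2 hl' hl
      simpa using this
end

section
/- Let S⊥ ≤ (ℤ_p × ℤ_p)^n and define the syndrome trellis with V_i = σ_i(S⊥) and E_i the set of triples (σ_{i−1}(P), P_i, σ_i(P)) for P ∈ S⊥. Then concatenation of edge labels gives a bijection between elements of S⊥ and directed length-n paths in the trellis from the unique vertex of V_0 to the unique vertex of V_n. -/
lemma syn_zero' {p n r : ℕ} (H : Fin r → Fin n → ZMod p × ZMod p)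
    (P : Fin n → ZMod p × ZMod p) : syn H 0 P = 0 := by
  funext j; simp [syn]

lemma syn_succ' {p n r : ℕ} (H : Fin r → Fin n → ZMod p × ZMod p)
    {i : ℕ} (hi : i < n) (P : Fin n → ZMod p × ZMod p) :
    syn H (i + 1) P = fun j => syn H i P j + symp (H j ⟨i, hi⟩) (P ⟨i, hi⟩) := by
  funext j
  simp only [syn]
  have h : ∀ l : Fin n, (if (l : ℕ) < i + 1 then symp (H j l) (P l) else 0)
      = (if (l : ℕ) < i then symp (H j l) (P l) else 0)
        + (if l = ⟨i, hi⟩ then symp (H j l) (P l) else 0) := by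
    intro l
    rcases lt_trichotomy (l : ℕ) i with h1 | h1 | h1
    · have hne : l ≠ ⟨i, hi⟩ := by intro e; rw [e] at h1; simp at h1
      simp [h1, Nat.lt_succ_of_lt h1, hne]
    · have heq : l = ⟨i, hi⟩ := Fin.ext h1
      subst heq
      simp
    · have h2 : ¬ (l : ℕ) < i := by omega
      have h3 : ¬ (l : ℕ) < i + 1 := by omega
      have hne : l ≠ ⟨i, hi⟩ := by intro e; subst e; simp at h1
      simp [h2, h3, hne]
  rw [Finset.sum_congr rfl (fun l _ => h l), Finset.sum_add_distrib,
    Finset.sum_ite_eq' Finset.univ (⟨i, hi⟩ : Fin n)]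
  simp

lemma vs_eq_syn {p n r : ℕ} (S : Submodule (ZMod p) (Fin n → ZMod p × ZMod p))
    (H : Fin r → Fin n → ZMod p × ZMod p) (Q : Fin n → ZMod p × ZMod p)
    (vs : Fin (n + 1) → (Fin r → ZMod p))
    (hv : ∀ i : Fin (n + 1), vs i ∈ trellisVertices S H i)
    (he : ∀ i : Fin n,
      (vs i.castSucc, Q i, vs i.succ) ∈ trellisEdges S H i i.isLt) :
    ∀ i : Fin (n + 1), vs i = syn H i Q := by
  intro i
  induction i using Fin.induction with
  | zero =>
    obtain ⟨P, _, hPe⟩ := hv 0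
    rw [← hPe]
    simp [syn_zero']
  | succ i ih =>
    obtain ⟨P, hP, hPe⟩ := he i
    rw [Prod.mk.injEq, Prod.mk.injEq] at hPe
    obtain ⟨h1, h2, h3⟩ := hPe
    have hival : ((i.succ : Fin (n+1)) : ℕ) = (i : ℕ) + 1 := rfl
    rw [h3, hival, syn_succ' H i.isLt P, syn_succ' H i.isLt Q]
    have hPQ : syn H (i : ℕ) P = syn H (i : ℕ) Q := by
      rw [← h1, ih]; rfl
    rw [hPQ, ← h2]


/-- Elements of `S⊥` are in bijection with length-`n` paths in the syndrome trellis: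
a Pauli string `Q` lies in `S⊥` iff there is a unique sequence of trellis vertices
`vs` such that every consecutive triple `(vs i, Q i, vs (i+1))` is a trellis edge
(and each `vs i` is a trellis vertex). (`S` is the symplectic dual of the row span
of `H`.) -/
theorem stmt18 (p n r : ℕ) [Fact p.Prime]
    (S : Submodule (ZMod p) (Fin n → ZMod p × ZMod p))
    (H : Fin r → Fin n → ZMod p × ZMod p)
    (hdual : ∀ P, P ∈ S ↔ ∀ j, (∑ l : Fin n, symp (H j l) (P l)) = 0)
    (Q : Fin n → ZMod p × ZMod p) :
    Q ∈ S ↔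
      ∃! vs : Fin (n + 1) → (Fin r → ZMod p),
        (∀ i : Fin (n + 1), vs i ∈ trellisVertices S H i) ∧
        (∀ i : Fin n,
          (vs i.castSucc, Q i, vs i.succ) ∈ trellisEdges S H i i.isLt) := by
  constructor
  · intro hQ
    refine ⟨fun i => syn H i Q, ⟨?_, ?_⟩, ?_⟩
    · intro i; exact ⟨Q, hQ, rfl⟩
    · intro i
      exact ⟨Q, hQ, rfl⟩
    · rintro vs ⟨hv, he⟩
      funext i
      exact vs_eq_syn S H Q vs hv he i
  · rintro ⟨vs, ⟨hv, he⟩, -⟩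
    have key := vs_eq_syn S H Q vs hv he (Fin.last n)
    obtain ⟨P, hP, hPe⟩ := hv (Fin.last n)
    rw [hdual]
    intro j
    have hfull : ∀ R : Fin n → ZMod p × ZMod p,
        syn H ((Fin.last n : Fin (n+1)) : ℕ) R j = ∑ l : Fin n, symp (H j l) (R l) := by
      intro R
      simp [syn, Fin.is_lt]
    have h0 : ∑ l : Fin n, symp (H j l) (P l) = 0 := (hdual P).mp hP j
    calc ∑ l : Fin n, symp (H j l) (Q l) = syn H ((Fin.last n : Fin (n+1)) : ℕ) Q j := (hfull Q).symm
      _ = vs (Fin.last n) j := by rw [key]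
      _ = syn H ((Fin.last n : Fin (n+1)) : ℕ) P j := by rw [← hPe]
      _ = 0 := by rw [hfull P]; exact h0
end

section
/- Any trellis T′ (layered graph whose length-n root-to-sink paths biject with S⊥ via edge labels and which at each depth partitions the paths through each vertex into product sets of pasts and futures) satisfies |V_i′| ≥ |S⊥| / (|S⊥_{𝔭_i}|·|S⊥_{𝔣_i}|) and |E_i′| ≥ |S⊥| / (|S⊥_{𝔭_{i−1}}|·|S⊥_{𝔣_i}|), i.e., the syndrome trellis is minimal among all trellises for the code. -/
variable {p n : ℕ}

lemma splice_isPath {n : ℕ} {Lbl : Type*} (T : Trellis n Lbl)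
    {P Q : Fin n → Lbl}
    {vsP vsQ : (i : Fin (n + 1)) → T.V i}
    (hvsP : T.IsPath vsP P) (hvsQ : T.IsPath vsQ Q)
    (m : Fin (n + 1)) (hm : vsP m = vsQ m) :
    T.IsPath (fun j => if (j : ℕ) < (m : ℕ) then vsP j else vsQ j)
      (fun j => if (j : ℕ) < (m : ℕ) then P j else Q j) := by
  intro k
  by_cases hk : (k : ℕ) < (m : ℕ)
  · by_cases hk1 : (k : ℕ) + 1 < (m : ℕ)
    · simpa [Fin.coe_castSucc, Fin.val_succ, hk, hk1] using hvsP k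
    · have hke : (k : ℕ) + 1 = (m : ℕ) := by omega
      have hm' : k.succ = m := Fin.ext (by simpa [Fin.val_succ] using hke)
      subst hm'
      simpa [Fin.coe_castSucc, Fin.val_succ, hk, hm] using hvsP k
  · have hk1 : ¬ ((k : ℕ) + 1 < (m : ℕ)) := by omega
    simpa [Fin.coe_castSucc, Fin.val_succ, hk, hk1] using hvsQ k

lemma splice_mem_s19 {p n : ℕ} (S : Submodule (ZMod p) (Fin n → ZMod p × ZMod p))
    (T : Trellis n (ZMod p × ZMod p))
    (hT : T.Represents (S : Set (Fin n → ZMod p × ZMod p)))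
    {P Q : Fin n → ZMod p × ZMod p}
    {vsP vsQ : (i : Fin (n + 1)) → T.V i}
    (hvsP : T.IsPath vsP P) (hvsQ : T.IsPath vsQ Q)
    (m : Fin (n + 1)) (hm : vsP m = vsQ m) :
    (fun j : Fin n => if (j : ℕ) < (m : ℕ) then P j else Q j) ∈ S := by
  by_contra h
  exact (hT _).2 h ⟨_, splice_isPath T hvsP hvsQ m hm⟩

/-- Minimality of the syndrome trellis: any (finite) trellis whose length-`n` paths
biject with the elements of `S⊥` via edge labels satisfies
`|V_i| ≥ |S⊥| / (|S⊥_{𝔭_i}|·|S⊥_{𝔣_i}|)` and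
`|E_i| ≥ |S⊥| / (|S⊥_{𝔭_{i−1}}|·|S⊥_{𝔣_i}|)`, stated multiplicatively. -/
theorem stmt19 (p n : ℕ) [Fact p.Prime]
    (S : Submodule (ZMod p) (Fin n → ZMod p × ZMod p))
    (T : Trellis n (ZMod p × ZMod p))
    (hfinV : ∀ i, Finite (T.V i))
    (hfinE : ∀ i, (T.E i).Finite)
    (hT : T.Represents (S : Set (Fin n → ZMod p × ZMod p))) :
    (∀ i : Fin (n + 1),
      Nat.card ↥S ≤ Nat.card (T.V i) *
        (Nat.card ↥(pastSub S i) * Nat.card ↥(futureSub S i))) ∧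
    (∀ i : Fin n,
      Nat.card ↥S ≤ Nat.card ↥(T.E i) *
        (Nat.card ↥(pastSub S i) * Nat.card ↥(futureSub S ((i : ℕ) + 1)))) := by
  classical
  haveI : NeZero p := ⟨(Fact.out : p.Prime).ne_zero⟩
  haveI : Finite ↥S := Subtype.finite
  haveI : ∀ k, Finite ↥(pastSub S k) := fun k => Subtype.finite
  haveI : ∀ k, Finite ↥(futureSub S k) := fun k => Subtype.finite
  set u : ↥S → ((j : Fin (n + 1)) → T.V j) :=
    fun P => ((hT P.1).1 P.2).exists.choose with hu_def
  have hu : ∀ P : ↥S, T.IsPath (u P) P.1 :=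
    fun P => ((hT P.1).1 P.2).exists.choose_spec
  -- splice of P with Q at cut point m, both in S
  have key : ∀ (Q : ↥S) (a b : Fin n → ZMod p × ZMod p),
      (Q : Fin n → ZMod p × ZMod p) = Q.1 + (a - Q.1) + (b - a) + (Q.1 - b) := by
    intro Q a b; abel
  constructor
  · intro i
    haveI := hfinV i
    set base : T.V i → ↥S := fun v =>
      if h : ∃ P : ↥S, u P i = v then h.choose else ⟨0, S.zero_mem⟩ with hbase_def
    have hbase : ∀ P : ↥S, u (base (u P i)) i = u P i := by
      intro P
      have h : ∃ Q : ↥S, u Q i = u P i := ⟨P, rfl⟩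
      simp only [hbase_def, dif_pos h]
      exact h.choose_spec
    set R : ↥S → (Fin n → ZMod p × ZMod p) := fun P =>
      fun j => if (j : ℕ) < (i : ℕ) then P.1 j else (base (u P i)).1 j with hR_def
    have hRS : ∀ P : ↥S, R P ∈ S := fun P =>
      splice_mem_s19 S T hT (hu P) (hu (base (u P i))) i (hbase P).symm
    have hpast : ∀ P : ↥S, R P - (base (u P i)).1 ∈ pastSub S i := by
      intro P
      refine ⟨S.sub_mem (hRS P) (base (u P i)).2, fun j hj => ?_⟩
      simp only [hR_def, Pi.sub_apply]
      rw [if_neg (by omega : ¬ ((j : ℕ) < (i : ℕ)))]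
      exact sub_self _
    have hfut : ∀ P : ↥S, P.1 - R P ∈ futureSub S i := by
      intro P
      refine ⟨S.sub_mem P.2 (hRS P), fun j hj => ?_⟩
      simp only [hR_def, Pi.sub_apply]
      rw [if_pos hj]
      exact sub_self _
    set g : ↥S → T.V i × (↥(pastSub S i) × ↥(futureSub S i)) := fun P =>
      (u P i, ⟨R P - (base (u P i)).1, hpast P⟩, ⟨P.1 - R P, hfut P⟩) with hg_def
    have hginj : Function.Injective g := by
      intro P₁ P₂ hg
      have h1 : u P₁ i = u P₂ i := congrArg Prod.fst hg
      have h2 : R P₁ - (base (u P₁ i)).1 = R P₂ - (base (u P₂ i)).1 :=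
        congrArg (fun x => (x.2.1 : Fin n → ZMod p × ZMod p)) hg
      have h3 : P₁.1 - R P₁ = P₂.1 - R P₂ :=
        congrArg (fun x => (x.2.2 : Fin n → ZMod p × ZMod p)) hg
      have hQ : (base (u P₁ i)).1 = (base (u P₂ i)).1 := by rw [h1]
      have e1 : (P₁ : Fin n → ZMod p × ZMod p) =
          (base (u P₁ i)).1 + (R P₁ - (base (u P₁ i)).1) + (P₁.1 - R P₁) := by abel
      have e2 : (P₂ : Fin n → ZMod p × ZMod p) =
          (base (u P₂ i)).1 + (R P₂ - (base (u P₂ i)).1) + (P₂.1 - R P₂) := by abel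
      exact Subtype.ext (by rw [e1, e2, h2, h3, hQ])
    calc Nat.card ↥S ≤
        Nat.card (T.V i × (↥(pastSub S i) × ↥(futureSub S i))) :=
          Nat.card_le_card_of_injective g hginj
      _ = Nat.card (T.V i) *
            (Nat.card ↥(pastSub S i) * Nat.card ↥(futureSub S i)) := by
          rw [Nat.card_prod, Nat.card_prod]
  · intro i
    haveI := (hfinE i).to_subtype
    set f : ↥S → ↥(T.E i) := fun P =>
      ⟨(u P i.castSucc, P.1 i, u P i.succ), hu P i⟩ with hf_def
    set base : ↥(T.E i) → ↥S := fun e =>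
      if h : ∃ P : ↥S, f P = e then h.choose else ⟨0, S.zero_mem⟩ with hbase_def
    have hbase : ∀ P : ↥S, f (base (f P)) = f P := by
      intro P
      have h : ∃ Q : ↥S, f Q = f P := ⟨P, rfl⟩
      simp only [hbase_def, dif_pos h]
      exact h.choose_spec
    have hbase1 : ∀ P : ↥S, u (base (f P)) i.castSucc = u P i.castSucc := by
      intro P
      have h0 := Subtype.ext_iff.mp (hbase P)
      exact congrArg Prod.fst h0
    have hbase2 : ∀ P : ↥S, ((base (f P)) : Fin n → ZMod p × ZMod p) i = P.1 i := by
      intro P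
      have h0 := Subtype.ext_iff.mp (hbase P)
      exact congrArg (fun x => x.2.1) h0
    set R : ↥S → (Fin n → ZMod p × ZMod p) := fun P =>
      fun j => if (j : ℕ) < (i : ℕ) then P.1 j else (base (f P)).1 j with hR_def
    have hRS : ∀ P : ↥S, R P ∈ S := by
      intro P
      have := splice_mem_s19 S T hT (hu P) (hu (base (f P))) i.castSucc (hbase1 P).symm
      simpa [Fin.coe_castSucc, hR_def] using this
    have hpast : ∀ P : ↥S, R P - (base (f P)).1 ∈ pastSub S i := by
      intro P
      refine ⟨S.sub_mem (hRS P) (base (f P)).2, fun j hj => ?_⟩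
      simp only [hR_def, Pi.sub_apply]
      rw [if_neg (by omega : ¬ ((j : ℕ) < (i : ℕ)))]
      exact sub_self _
    have hfut : ∀ P : ↥S, P.1 - R P ∈ futureSub S ((i : ℕ) + 1) := by
      intro P
      refine ⟨S.sub_mem P.2 (hRS P), fun j hj => ?_⟩
      rcases lt_or_eq_of_le (Nat.lt_succ_iff.mp hj) with h | h
      · simp only [hR_def, Pi.sub_apply]
        rw [if_pos h]
        exact sub_self _
      · have hj' : ¬ ((j : ℕ) < (i : ℕ)) := by omega
        have hji : j = i := Fin.ext h
        simp only [hR_def, Pi.sub_apply]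
        rw [if_neg hj', hji, hbase2 P]
        exact sub_self _
    set g : ↥S → ↥(T.E i) × (↥(pastSub S i) × ↥(futureSub S ((i : ℕ) + 1))) := fun P =>
      (f P, ⟨R P - (base (f P)).1, hpast P⟩, ⟨P.1 - R P, hfut P⟩) with hg_def
    have hginj : Function.Injective g := by
      intro P₁ P₂ hg
      have h1 : f P₁ = f P₂ := congrArg Prod.fst hg
      have h2 : R P₁ - (base (f P₁)).1 = R P₂ - (base (f P₂)).1 :=
        congrArg (fun x => (x.2.1 : Fin n → ZMod p × ZMod p)) hg
      have h3 : P₁.1 - R P₁ = P₂.1 - R P₂ :=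
        congrArg (fun x => (x.2.2 : Fin n → ZMod p × ZMod p)) hg
      have hQ : (base (f P₁)).1 = (base (f P₂)).1 := by rw [h1]
      have e1 : (P₁ : Fin n → ZMod p × ZMod p) =
          (base (f P₁)).1 + (R P₁ - (base (f P₁)).1) + (P₁.1 - R P₁) := by abel
      have e2 : (P₂ : Fin n → ZMod p × ZMod p) =
          (base (f P₂)).1 + (R P₂ - (base (f P₂)).1) + (P₂.1 - R P₂) := by abel
      exact Subtype.ext (by rw [e1, e2, h2, h3, hQ])
    calc Nat.card ↥S ≤
        Nat.card (↥(T.E i) × (↥(pastSub S i) × ↥(futureSub S ((i : ℕ) + 1)))) :=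
          Nat.card_le_card_of_injective g hginj
      _ = Nat.card ↥(T.E i) *
            (Nat.card ↥(pastSub S i) * Nat.card ↥(futureSub S ((i : ℕ) + 1))) := by
          rw [Nat.card_prod, Nat.card_prod]
end
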